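/- arXiv:1803.00769 — 3 statements merged into one kernel-verified Lean document; each statement's English description precedes it below -/
import Mathlib

section
/- For J1 ≤ -6·J2 and J2 ≥ 0, the value U1 = 2·J1 + 6·J2 is a minimum of the twelve values U1,...,U12 (as defined by U1 = 2J1+6J2, U2 = (3/2)J1+3J2, U3 = J1+2J2, U4 = (1/2)J1+3J2, U5 = 6J2, U6 = (1/2)J1, U7 = 3J2, U8 = J2, U9 = J1+J2, U10 = (1/2)J1+J2, U11 = 2J2, U12 = 0). -/
/-- The minimum of the twelve unit-ball energies of the Potts model
with competing interactions on the Cayley tree of order 3. -/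
noncomputable def Umin (J1 J2 : ℝ) : ℝ :=
  min (2*J1 + 6*J2) (min ((3/2)*J1 + 3*J2) (min (J1 + 2*J2) (min ((1/2)*J1 + 3*J2)
    (min (6*J2) (min ((1/2)*J1) (min (3*J2) (min J2 (min (J1 + J2)
    (min ((1/2)*J1 + J2) (min (2*J2) 0))))))))))
/-- For `J1 ≤ -6J2` and `J2 ≥ 0`, the value `U1 = 2J1 + 6J2` is a minimum of the twelve values. -/
theorem U1_min (J1 J2 : ℝ) (h1 : J1 ≤ -6*J2) (h2 : J2 ≥ 0) :
    2*J1 + 6*J2 = Umin J1 J2 := by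
  refine (min_eq_left ?_).symm
  simp only [le_min_iff]
  repeat' constructor
  all_goals linarith
end

section
/- The value U3 = J1 + 2·J2 equals the minimum of the twelve values U1 = 2J1+6J2, U2 = (3/2)J1+3J2, U3 = J1+2J2, U4 = (1/2)J1+3J2, U5 = 6J2, U6 = (1/2)J1, U7 = 3J2, U8 = J2, U9 = J1+J2, U10 = (1/2)J1+J2, U11 = 2J2, U12 = 0 if and only if J1 = 0 and J2 = 0. -/
/-- `U3 = J1 + 2J2` equals the minimum of the twelve values iff `J1 = 0` and `J2 = 0`. -/
theorem U3_min_iff (J1 J2 : ℝ) :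
    J1 + 2*J2 = Umin J1 J2 ↔ J1 = 0 ∧ J2 = 0 := by
  constructor
  · intro h
    have h' : J1 + 2*J2 ≤ Umin J1 J2 := h.le
    simp only [Umin, le_min_iff] at h'
    obtain ⟨a1, a2, a3, a4, a5, a6, a7, a8, a9, a10, a11, a12⟩ := h'
    constructor <;> linarith
  · rintro ⟨rfl, rfl⟩
    simp [Umin]
end

section
/- The set A_1 ∩ A_2, where A_i = {(J1,J2) ∈ ℝ² : U_i = min(U1,...,U12)} with U1 = 2J1+6J2, U2 = (3/2)J1+3J2 and the remaining U_i as listed, equals the ray {(J1,J2) : J2 ≥ 0 and J1 = -6J2}. -/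
/-- `A₁ ∩ A₂` equals the ray `{(J1,J2) : J2 ≥ 0, J1 = -6J2}`. -/
theorem A1_inter_A2 :
    {p : ℝ × ℝ | 2*p.1 + 6*p.2 = Umin p.1 p.2 ∧ (3/2)*p.1 + 3*p.2 = Umin p.1 p.2}
      = {p : ℝ × ℝ | p.2 ≥ 0 ∧ p.1 = -6*p.2} := by
  ext p
  simp only [Set.mem_setOf_eq]
  constructor
  · rintro ⟨h1, h2⟩
    have h0 : Umin p.1 p.2 ≤ 0 := by
      unfold Umin
      exact le_trans (min_le_right _ _) (le_trans (min_le_right _ _)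
        (le_trans (min_le_right _ _) (le_trans (min_le_right _ _)
        (le_trans (min_le_right _ _) (le_trans (min_le_right _ _)
        (le_trans (min_le_right _ _) (le_trans (min_le_right _ _)
        (le_trans (min_le_right _ _) (le_trans (min_le_right _ _)
        (min_le_right _ _))))))))))
    constructor
    · linarith
    · linarith
  · rintro ⟨h2, h1⟩
    have hmin : Umin p.1 p.2 = 2*p.1 + 6*p.2 := by
      apply le_antisymm
      · exact min_le_left _ _
      · simp only [Umin, le_min_iff]
        refine ⟨le_refl _, ?_, ?_, ?_, ?_, ?_, ?_, ?_, ?_, ?_, ?_, ?_⟩ <;> linarith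
    constructor
    · rw [hmin]
    · rw [hmin]; linarith
end
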